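/- arXiv:1103.2650 — 9 statements merged into one kernel-verified Lean document; each statement's English description precedes it below -/
import Mathlib

section
/- For all natural numbers n, m, r, the identity ∑_{k=0}^{n} C(m+k, k) · C(n+r−k, n−k) = C(n+m+r+1, n) holds. -/
/-! The generating function of `k ↦ (a + k).choose a` is `(1 - X)⁻¹ ^ (a + 1)`, so the identity is
the coefficient of `X ^ n` in `(1 - X)⁻¹ ^ (m + 1) * (1 - X)⁻¹ ^ (r + 1) = (1 - X)⁻¹ ^ (m + r + 2)`. -/

open Finset PowerSeries

theorem Nat.sum_antidiagonal_add_choose_mul_add_choose (a b n : ℕ) :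
    ∑ ij ∈ antidiagonal n, (a + ij.1).choose a * (b + ij.2).choose b =
      (a + b + 1 + n).choose (a + b + 1) := by
  have h := congrArg (coeff (R := ℤ) n) (pow_add (mk 1 : ℤ⟦X⟧) (a + 1) (b + 1))
  rw [show a + 1 + (b + 1) = a + b + 1 + 1 by ring, mk_one_pow_eq_mk_choose_add,
    mk_one_pow_eq_mk_choose_add, mk_one_pow_eq_mk_choose_add, coeff_mul] at h
  simp only [coeff_mk] at h
  exact_mod_cast h.symm

theorem vandermonde_like (n m r : ℕ) :
    ∑ k ∈ Finset.range (n + 1),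
      Nat.choose (m + k) k * Nat.choose (n + r - k) (n - k)
    = Nat.choose (n + m + r + 1) n := by
  have key := Nat.sum_antidiagonal_add_choose_mul_add_choose m r n
  rw [Nat.sum_antidiagonal_eq_sum_range_succ (fun i j ↦ (m + i).choose m * (r + j).choose r)]
    at key
  calc ∑ k ∈ range (n + 1), (m + k).choose k * (n + r - k).choose (n - k)
      = ∑ k ∈ range (n + 1), (m + k).choose m * (r + (n - k)).choose r := by
        refine sum_congr rfl fun k hk ↦ ?_
        rw [show n + r - k = r + (n - k) by grind, Nat.choose_symm_add,
          Nat.choose_symm_add]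
    _ = (m + r + 1 + n).choose (m + r + 1) := key
    _ = (n + m + r + 1).choose n := by rw [Nat.choose_symm_add, add_comm, ← add_assoc, ← add_assoc]
end

section
/- For all natural numbers n, m, r, the identity ∑_{k=0}^{n} ((m+1)/(m+k+1)) · C(m+2k, k) · C(2n+r−2k, n−k) = C(2n+m+r+1, n) holds, where both sides are interpreted as rational numbers. -/
/-!
Write `a_k = (m+1)/(m+k+1) · C(m+2k, k)` and `S(n, r) = ∑_{i+j=n} a_i C(2j+r, j)`.
Pascal's rule applied to `C(2j+r, j)` gives, for an arbitrary sequence `a`,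
`S(n+1, r+1) = S(n, r+2) + S(n+1, r)` and `S(n+1, 0) = 2 S(n, 1) + a_{n+1}`,
while `C(2n+m+r+1, n)` satisfies the first recurrence by Pascal's rule as well.
So it suffices to check the initial values: `a_0 = 1` and
`a_{n+1} + 2 C(2n+m+2, n) = C(2n+m+3, n+1)`, the latter being
`(n+1) C(N, n+1) = (N-n) C(N, n)` for `N = 2n+m+2`.
-/

open Finset

section ConvChoose

variable {R : Type*} [Semiring R]

def convChoose (a : ℕ → R) (n r : ℕ) : R :=
  ∑ p ∈ antidiagonal n, a p.1 * ((2 * p.2 + r).choose p.2 : R)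

theorem convChoose_zero (a : ℕ → R) (r : ℕ) : convChoose a 0 r = a 0 := by
  simp [convChoose]

theorem convChoose_succ_zero (a : ℕ → R) (n : ℕ) :
    convChoose a (n + 1) 0 = 2 * convChoose a n 1 + a (n + 1) := by
  have hdouble (i j : ℕ) : a i * ((2 * (j + 1) + 0).choose (j + 1) : R) =
      2 * (a i * (2 * j + 1).choose j) := by
    rw [show 2 * (j + 1) + 0 = 2 * j + 1 + 1 by ring, Nat.choose_succ_succ,
      Nat.choose_symm_half, ← two_mul, Nat.cast_mul, Nat.cast_ofNat, ← mul_assoc,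
      (Commute.ofNat_right _ 2).eq, mul_assoc]
  simp only [convChoose, Nat.sum_antidiagonal_succ', hdouble, ← mul_sum, Nat.choose_zero_right,
    Nat.cast_one, mul_one]
  exact add_comm _ _

theorem convChoose_succ_succ (a : ℕ → R) (n r : ℕ) :
    convChoose a (n + 1) (r + 1) = convChoose a n (r + 2) + convChoose a (n + 1) r := by
  have hpascal (i j : ℕ) : a i * ((2 * (j + 1) + (r + 1)).choose (j + 1) : R) =
      a i * (2 * j + (r + 2)).choose j + a i * (2 * (j + 1) + r).choose (j + 1) := by
    rw [show 2 * (j + 1) + (r + 1) = 2 * j + (r + 2) + 1 by ring, Nat.choose_succ_succ,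
      show 2 * j + (r + 2) = 2 * (j + 1) + r by ring, Nat.cast_add, mul_add]
  simp only [convChoose, Nat.sum_antidiagonal_succ']
  simp only [hpascal, sum_add_distrib, Nat.choose_zero_right]
  abel

end ConvChoose

def ballot (m k : ℕ) : ℚ :=
  ((m : ℚ) + 1) / ((m : ℚ) + k + 1) * (Nat.choose (m + 2 * k) k : ℚ)

theorem ballot_zero (m : ℕ) : ballot m 0 = 1 := by
  have : (m : ℚ) + 1 ≠ 0 := by positivity
  simp [ballot, this]

theorem ballot_succ_add_two_mul_choose (m n : ℕ) :
    ballot m (n + 1) + 2 * ((2 * n + m + 2).choose n : ℚ) = (2 * n + m + 3).choose (n + 1) := by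
  set N := 2 * n + m + 2
  have hratio : (N.choose (n + 1) : ℚ) * (n + 1) = (N.choose n : ℚ) * (m + n + 2) := by
    have h := Nat.choose_succ_right_eq N n
    rw [show N - n = m + n + 2 by omega] at h
    exact_mod_cast h
  rw [ballot, show m + 2 * (n + 1) = N by omega, show 2 * n + m + 3 = N + 1 by omega,
    Nat.choose_succ_succ N n]
  push_cast
  field_simp
  linear_combination -hratio

theorem convChoose_ballot (m n r : ℕ) :
    convChoose (ballot m) n r = (2 * n + m + r + 1).choose n := by
  induction n generalizing r with
  | zero => simp [convChoose_zero, ballot_zero]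
  | succ n ih =>
    induction r with
    | zero =>
      rw [convChoose_succ_zero, ih, add_comm, show 2 * n + m + 1 + 1 = 2 * n + m + 2 by ring,
        ballot_succ_add_two_mul_choose, show 2 * (n + 1) + m + 0 + 1 = 2 * n + m + 3 by ring]
    | succ r ihr =>
      rw [convChoose_succ_succ, ih, ihr, ← Nat.cast_add,
        show 2 * (n + 1) + m + (r + 1) + 1 = 2 * n + m + (r + 2) + 1 + 1 by ring,
        Nat.choose_succ_succ (2 * n + m + (r + 2) + 1) n,
        show 2 * (n + 1) + m + r + 1 = 2 * n + m + (r + 2) + 1 by ring]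

theorem combiwalk2 (n m r : ℕ) :
    ∑ k ∈ Finset.range (n + 1),
      ((m : ℚ) + 1) / ((m : ℚ) + k + 1) *
        (Nat.choose (m + 2 * k) k : ℚ) *
        (Nat.choose (2 * n + r - 2 * k) (n - k) : ℚ)
    = (Nat.choose (2 * n + m + r + 1) n : ℚ) := by
  rw [← convChoose_ballot, convChoose, Nat.sum_antidiagonal_eq_sum_range_succ_mk]
  refine sum_congr rfl fun k hk => ?_
  rw [show 2 * n + r - 2 * k = 2 * (n - k) + r by
    have := mem_range.mp hk
    omega]
  rfl
end

section
/- For all natural numbers n and m, the identity ∑_{k=0}^{n} ((2k+1)² / ((n+k+1)(m+k+1))) · C(2m, m+k) · C(2n, n+k) = (1/(n+m+1)) · C(2n+2m, n+m) holds, where both sides are interpreted as rational numbers. -/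
/-!
Write `u_n(k) = C(2n, n+k)`. The ballot identity `(2k+1)/(n+k+1) · u_n(k) = u_n(k) - u_n(k+1)` turns
the summand into `(u_n(k) - u_n(k+1)) (u_m(k) - u_m(k+1))`. Expanding, the two "diagonal" sums
`∑ u_n(k) u_m(k) + ∑ u_n(k+1) u_m(k+1)` and the two "off-diagonal" sums are the two halves of the
Vandermonde convolutions for `C(2n+2m, n+m)` and `C(2n+2m, n+m+1)`, split at the centre by the
symmetry of `u`. Their difference is the ballot identity for `n+m` at `k = 0`.
-/

open Finset

theorem Finset.sum_range_succ_eq_sum_range_succ {M : Type*} [AddCommMonoid M] {f : ℕ → M}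
    {n m : ℕ} (hn : ∀ k > n, f k = 0) (hm : ∀ k > m, f k = 0) :
    ∑ k ∈ range (n + 1), f k = ∑ k ∈ range (m + 1), f k := by
  rcases le_total n m with h | h
  · exact (eventually_constant_sum (fun k hk => hn k (by omega)) (by omega)).symm
  · exact eventually_constant_sum (fun k hk => hm k (by omega)) (by omega)

theorem Nat.add_choose_eq_sum_add_sum (a b p q : ℕ) :
    (a + b).choose (p + q) =
      ∑ k ∈ range (q + 1), a.choose (p + k) * b.choose (q - k) +
        ∑ k ∈ range p, a.choose (p - 1 - k) * b.choose (q + 1 + k) := by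
  rw [Nat.add_choose_eq, Nat.sum_antidiagonal_eq_sum_range_succ_mk, Nat.succ_eq_add_one,
    show p + q + 1 = p + (q + 1) by omega, sum_range_add, add_comm, ← sum_range_reflect _ p]
  congr 1
  · refine sum_congr rfl fun k _ => ?_
    rw [Nat.add_sub_add_left]
  · refine sum_congr rfl fun k hk => ?_
    rw [show p + q - (p - 1 - k) = q + 1 + k by have := mem_range.1 hk; omega]

theorem Nat.choose_two_mul_add_eq_zero (n : ℕ) {k : ℕ} (hk : n < k) :
    (2 * n).choose (n + k) = 0 :=
  Nat.choose_eq_zero_of_lt (by omega)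

theorem Nat.choose_two_mul_sub (n : ℕ) {k : ℕ} (hk : k ≤ n) :
    (2 * n).choose (n - k) = (2 * n).choose (n + k) :=
  Nat.choose_symm_of_eq_add (by omega)

theorem Nat.choose_two_mul_sub_one_sub (n : ℕ) {k : ℕ} (hk : k < n) :
    (2 * n).choose (n - 1 - k) = (2 * n).choose (n + k + 1) :=
  Nat.choose_symm_of_eq_add (by omega)

theorem Nat.choose_two_mul_add_two_mul_eq_sum (n m : ℕ) :
    (2 * n + 2 * m).choose (n + m) =
      ∑ k ∈ range (m + 1), (2 * n).choose (n + k) * (2 * m).choose (m + k) +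
        ∑ k ∈ range n, (2 * n).choose (n + k + 1) * (2 * m).choose (m + k + 1) := by
  rw [Nat.add_choose_eq_sum_add_sum]
  congr 1
  · refine sum_congr rfl fun k hk => ?_
    rw [Nat.choose_two_mul_sub m (Nat.lt_succ_iff.1 (mem_range.1 hk))]
  · refine sum_congr rfl fun k hk => ?_
    rw [Nat.choose_two_mul_sub_one_sub n (mem_range.1 hk), add_right_comm m]

theorem Nat.choose_two_mul_add_two_mul_succ_eq_sum (n m : ℕ) :
    (2 * n + 2 * m).choose (n + m + 1) =
      ∑ k ∈ range (m + 1), (2 * n).choose (n + k + 1) * (2 * m).choose (m + k) +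
        ∑ k ∈ range (n + 1), (2 * n).choose (n + k) * (2 * m).choose (m + k + 1) := by
  rw [show n + m + 1 = (n + 1) + m by omega, Nat.add_choose_eq_sum_add_sum]
  congr 1
  · refine sum_congr rfl fun k hk => ?_
    rw [Nat.choose_two_mul_sub m (Nat.lt_succ_iff.1 (mem_range.1 hk)), add_right_comm n]
  · refine sum_congr rfl fun k hk => ?_
    rw [Nat.add_sub_cancel, Nat.choose_two_mul_sub n (Nat.lt_succ_iff.1 (mem_range.1 hk)),
      add_right_comm m]

theorem sum_range_choose_sub_mul_choose_sub {R : Type*} [CommRing R] (n m : ℕ) :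
    ∑ k ∈ range (n + 1),
        (((2 * n).choose (n + k) : R) - (2 * n).choose (n + k + 1)) *
          (((2 * m).choose (m + k) : R) - (2 * m).choose (m + k + 1)) =
      ((2 * n + 2 * m).choose (n + m) : R) - (2 * n + 2 * m).choose (n + m + 1) := by
  have hn : ∀ k > n, ((2 * n).choose (n + k) : R) = 0 := fun k hk => by
    rw [Nat.choose_two_mul_add_eq_zero n hk, Nat.cast_zero]
  have hm : ∀ k > m, ((2 * m).choose (m + k) : R) = 0 := fun k hk => by
    rw [Nat.choose_two_mul_add_eq_zero m hk, Nat.cast_zero]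
  have hn_succ : ∀ k ≥ n, ((2 * n).choose (n + k + 1) : R) = 0 := fun k hk => by
    rw [Nat.choose_eq_zero_of_lt (by omega), Nat.cast_zero]
  have diagonal : ∑ k ∈ range (n + 1), ((2 * n).choose (n + k) : R) * (2 * m).choose (m + k) =
      ∑ k ∈ range (m + 1), ((2 * n).choose (n + k) : R) * (2 * m).choose (m + k) :=
    sum_range_succ_eq_sum_range_succ (fun k hk => by rw [hn k hk, zero_mul])
      (fun k hk => by rw [hm k hk, mul_zero])
  have shifted_diagonal :
      ∑ k ∈ range (n + 1), ((2 * n).choose (n + k + 1) : R) * (2 * m).choose (m + k + 1) =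
        ∑ k ∈ range n, ((2 * n).choose (n + k + 1) : R) * (2 * m).choose (m + k + 1) :=
    eventually_constant_sum (fun k hk => by rw [hn_succ k hk, zero_mul]) (by omega)
  have off_diagonal :
      ∑ k ∈ range (n + 1), ((2 * n).choose (n + k + 1) : R) * (2 * m).choose (m + k) =
        ∑ k ∈ range (m + 1), ((2 * n).choose (n + k + 1) : R) * (2 * m).choose (m + k) :=
    sum_range_succ_eq_sum_range_succ (fun k hk => by rw [hn_succ k hk.le, zero_mul])
      (fun k hk => by rw [hm k hk, mul_zero])
  have vandermonde := congrArg (Nat.cast : ℕ → R) (Nat.choose_two_mul_add_two_mul_eq_sum n m)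
  have vandermonde_succ :=
    congrArg (Nat.cast : ℕ → R) (Nat.choose_two_mul_add_two_mul_succ_eq_sum n m)
  push_cast at vandermonde vandermonde_succ
  simp only [sub_mul, mul_sub, sum_sub_distrib]
  rw [vandermonde, vandermonde_succ, diagonal, shifted_diagonal, off_diagonal]
  ring

theorem Nat.choose_two_mul_add_sub_choose_succ {K : Type*} [Field K] [CharZero K] (n k : ℕ) :
    ((2 * n).choose (n + k) : K) - (2 * n).choose (n + k + 1) =
      (2 * k + 1) / (n + k + 1) * (2 * n).choose (n + k) := by
  rcases lt_or_ge n k with hk | hk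
  · rw [Nat.choose_two_mul_add_eq_zero n hk, Nat.choose_eq_zero_of_lt (by omega)]
    simp
  have h := congrArg (Nat.cast : ℕ → K) (Nat.choose_succ_right_eq (2 * n) (n + k))
  push_cast [Nat.cast_sub (show n + k ≤ 2 * n by omega)] at h
  have hne : (n + k + 1 : K) ≠ 0 := by exact_mod_cast (n + k).succ_ne_zero
  field_simp
  linear_combination -h

theorem combiwalk5 (n m : ℕ) :
    ∑ k ∈ Finset.range (n + 1),
      ((2 * (k : ℚ) + 1) ^ 2 / (((n : ℚ) + k + 1) * ((m : ℚ) + k + 1))) *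
        (Nat.choose (2 * m) (m + k) : ℚ) *
        (Nat.choose (2 * n) (n + k) : ℚ)
    = 1 / ((n : ℚ) + m + 1) * (Nat.choose (2 * n + 2 * m) (n + m) : ℚ) := by
  calc _ = ∑ k ∈ range (n + 1),
          (((2 * n).choose (n + k) : ℚ) - (2 * n).choose (n + k + 1)) *
            (((2 * m).choose (m + k) : ℚ) - (2 * m).choose (m + k + 1)) := by
        refine sum_congr rfl fun k _ => ?_
        rw [Nat.choose_two_mul_add_sub_choose_succ, Nat.choose_two_mul_add_sub_choose_succ, sq,
          mul_div_mul_comm]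
        ring
    _ = ((2 * n + 2 * m).choose (n + m) : ℚ) - (2 * n + 2 * m).choose (n + m + 1) :=
        sum_range_choose_sub_mul_choose_sub n m
    _ = _ := by
        have central := Nat.choose_two_mul_add_sub_choose_succ (K := ℚ) (n + m) 0
        rw [mul_add, add_zero] at central
        rw [central]
        push_cast
        ring
end

section
/- For all natural numbers n and m, the identity ∑_{k=0}^{n} ((k+1)(k+2)/(m+k+2)) · C(2m+k+1, m) · C(2n−k, n) = ((n+1)/(n+m+2)) · C(2n+2m+2, n+m+1) holds, where both sides are interpreted as rational numbers. -/
/-!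
As functions of `m`, both sides satisfy `(n + m + 3) s (m + 1) = 2 (2n + 2m + 3) s m`. For the
right side this is the recurrence of the central binomial coefficients; for the sum it follows by
telescoping over `k`, with Zeilberger's certificate `k (k - 2n - 1) / (m + 1)` times the summand.
At `m = 0` the sum is `∑ (k + 1) C(2n - k, n)`, which telescopes as well.
-/

open Finset

namespace Nat

variable {K : Type*} [Field K] [CharZero K]

theorem cast_choose_add_succ_left (a b : ℕ) :
    ((a + b + 1).choose b : K) = (a + b).choose b * (a + b + 1) / (a + 1) := by
  have h := choose_mul_succ_eq (a + b) b
  rw [show a + b + 1 - b = a + 1 by omega] at h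
  rw [eq_div_iff (by norm_cast)]
  exact_mod_cast h.symm

theorem cast_choose_succ_succ (a b : ℕ) :
    ((a + 1).choose (b + 1) : K) = (a + 1) * a.choose b / (b + 1) := by
  rw [eq_div_iff (by norm_cast)]
  exact_mod_cast (add_one_mul_choose_eq a b).symm

theorem cast_choose_pred_mul {R : Type*} [CommRing R] (a b : ℕ) :
    ((a - 1).choose b : R) * a = a.choose b * (a - b) := by
  rcases a with _ | a
  · rcases b with _ | b <;> simp
  rcases le_or_gt b (a + 1) with h | h
  · rw [add_tsub_cancel_right, ← Nat.cast_sub h]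
    exact_mod_cast congrArg (Nat.cast : ℕ → R) (choose_mul_succ_eq a b)
  · simp [choose_eq_zero_of_lt h, choose_eq_zero_of_lt (show a < b by omega)]

theorem centralBinom_succ_eq_two_mul_choose (n : ℕ) :
    centralBinom (n + 1) = 2 * (2 * n + 1).choose (n + 1) := by
  rw [centralBinom, show 2 * (n + 1) = 2 * n + 1 + 1 by ring, choose_succ_succ',
    choose_symm_half]
  ring

theorem cast_centralBinom_succ (n : ℕ) :
    (centralBinom (n + 1) : K) = 2 * (2 * n + 1) * centralBinom n / (n + 1) := by
  rw [eq_div_iff (by norm_cast), mul_comm]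
  exact_mod_cast succ_mul_centralBinom_succ n

end Nat

namespace Combiwalk

open Nat

def term (n m k : ℕ) : ℚ :=
  (((k : ℚ) + 1) * ((k : ℚ) + 2) / ((m : ℚ) + k + 2)) *
    (Nat.choose (2 * m + k + 1) m : ℚ) * (Nat.choose (2 * n - k) n : ℚ)

def certificate (n m k : ℕ) : ℚ :=
  k * (k - (2 * n + 1)) / (m + 1) * term n m k

theorem term_succ_m (n m k : ℕ) :
    term n (m + 1) k
      = (2 * m + k + 2) * (2 * m + k + 3) / (m + 1) / (m + k + 3) * term n m k := by
  have hA1 := cast_choose_add_succ_left (K := ℚ) (m + k + 1) m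
  have hA2 := cast_choose_succ_succ (K := ℚ) (2 * m + k + 2) m
  rw [show m + k + 1 + m = 2 * m + k + 1 by ring] at hA1
  rw [show 2 * m + k + 2 + 1 = 2 * (m + 1) + k + 1 by ring,
    show 2 * m + k + 1 + 1 = 2 * m + k + 2 by ring] at *
  unfold term
  rw [hA2, hA1]
  push_cast
  field_simp
  ring

theorem certificate_succ (n m k : ℕ) (hk : k ≤ n) :
    certificate n m (k + 1)
      = (k - n) * (k + 3) * (2 * m + k + 2) / (m + 1) / (m + k + 3) * term n m k := by
  have hA1 := cast_choose_add_succ_left (K := ℚ) (m + k + 1) m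
  rw [show m + k + 1 + m = 2 * m + k + 1 by ring] at hA1
  have hB := cast_choose_pred_mul (R := ℚ) (2 * n - k) n
  rw [show 2 * n - k - 1 = 2 * n - (k + 1) by omega, Nat.cast_sub (by omega)] at hB
  push_cast at hB
  unfold certificate term
  rw [show 2 * m + (k + 1) + 1 = 2 * m + k + 1 + 1 by ring, hA1]
  push_cast
  linear_combination (-((k : ℚ) + 1) * (k + 2) * (k + 3) * (2 * m + k + 2) /
    (m + 1) / (m + k + 3) / (m + k + 2) * (Nat.choose (2 * m + k + 1) m : ℚ)) * hB

theorem certificate_zero (n m : ℕ) : certificate n m 0 = 0 := by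
  simp [certificate]

theorem certificate_succ_self (n m : ℕ) : certificate n m (n + 1) = 0 := by
  simp [certificate_succ n m n le_rfl]

theorem term_sub_certificate (n m k : ℕ) (hk : k ≤ n) :
    (n + m + 3) * term n (m + 1) k - 2 * (2 * n + 2 * m + 3) * term n m k
      = certificate n m (k + 1) - certificate n m k := by
  rw [term_succ_m, certificate_succ n m k hk, certificate]
  field_simp
  ring

theorem sum_term_succ_m (n m : ℕ) :
    (n + m + 3) * ∑ k ∈ range (n + 1), term n (m + 1) k
      = 2 * (2 * n + 2 * m + 3) * ∑ k ∈ range (n + 1), term n m k := by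
  have h := sum_congr rfl fun k hk => term_sub_certificate n m k (mem_range_succ_iff.mp hk)
  rw [sum_range_sub, certificate_succ_self, certificate_zero, sum_sub_distrib, ← mul_sum,
    ← mul_sum] at h
  linear_combination h

def baseCertificate (n k : ℕ) : ℚ :=
  (n + 1) * (k + 2) / (n + 2) * (2 * n + 1 - k).choose (n + 1)

theorem term_zero_m (n k : ℕ) : term n 0 k = (k + 1) * (2 * n - k).choose n := by
  rw [term]
  push_cast
  field_simp
  simp

theorem term_zero_m_eq_baseCertificate_sub (n k : ℕ) (hk : k ≤ n) :
    term n 0 k = baseCertificate n k - baseCertificate n (k + 1) := by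
  have hpascal := choose_succ_succ' (2 * n - k) n
  have hright := choose_succ_right_eq (2 * n - k) n
  rw [show 2 * n - k + 1 = 2 * n + 1 - k by omega] at hpascal
  rw [show 2 * n - k - n = n - k by omega] at hright
  have hright' : ((2 * n - k).choose (n + 1) : ℚ) * (n + 1) = (2 * n - k).choose n * (n - k) := by
    rw [← Nat.cast_sub hk]; exact_mod_cast hright
  rw [term_zero_m, baseCertificate, baseCertificate, hpascal,
    show 2 * n + 1 - (k + 1) = 2 * n - k by omega]
  push_cast
  field_simp
  linear_combination hright'

theorem sum_term_zero_m (n : ℕ) :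
    ∑ k ∈ range (n + 1), term n 0 k = (n + 1) / (n + 2) * centralBinom (n + 1) := by
  rw [sum_congr rfl fun k hk =>
      term_zero_m_eq_baseCertificate_sub n k (mem_range_succ_iff.mp hk),
    sum_range_sub', baseCertificate, baseCertificate, centralBinom_succ_eq_two_mul_choose,
    show 2 * n + 1 - (n + 1) = n by omega, choose_succ_self]
  push_cast
  ring

theorem sum_term (n m : ℕ) :
    ∑ k ∈ range (n + 1), term n m k = (n + 1) / (n + m + 2) * centralBinom (n + m + 1) := by
  induction m with
  | zero => simpa using sum_term_zero_m n
  | succ m ih =>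
    apply mul_left_cancel₀ (show (n + m + 3 : ℚ) ≠ 0 by positivity)
    rw [sum_term_succ_m, ih, show n + (m + 1) + 1 = n + m + 1 + 1 by ring,
      cast_centralBinom_succ (n + m + 1)]
    push_cast
    field_simp
    ring

end Combiwalk

theorem combiwalk6 (n m : ℕ) :
    ∑ k ∈ Finset.range (n + 1),
      (((k : ℚ) + 1) * ((k : ℚ) + 2) / ((m : ℚ) + k + 2)) *
        (Nat.choose (2 * m + k + 1) m : ℚ) *
        (Nat.choose (2 * n - k) n : ℚ)
    = ((n : ℚ) + 1) / ((n : ℚ) + m + 2) *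
        (Nat.choose (2 * n + 2 * m + 2) (n + m + 1) : ℚ) := by
  rw [show 2 * n + 2 * m + 2 = 2 * (n + m + 1) by ring]
  exact Combiwalk.sum_term n m
end

section
/- For all natural numbers n and m, the identity ∑_{k=0}^{n} (((m+1)(m+5) + 3(m+2k+1)²) / ((m+k+1)(m+k+2)(m+k+3))) · C(m+2k, k) = (4/(n+m+3)) · C(2n+m+2, n) holds, where both sides are interpreted as rational numbers. -/
/-!
The summand is a discrete derivative: with `c k = C(m + 2k, k)` and
`S N = 4N / ((N + m + 1)(N + m + 2)) · c N`, the `k`-th term equals `S (k + 1) - S k`,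
and `S (n + 1)` is the right-hand side. Both facts reduce, via the ratios
`c (k + 1) / C(m + 2k + 2, k)` and `C(m + 2k + 2, k) / c k`, to rational function identities.
-/

open Finset

theorem Nat.choose_mul_succ_mul_succ (n k : ℕ) :
    n.choose k * (n + 1) * (n + 2) = (n + 2).choose k * (n + 1 - k) * (n + 2 - k) := by
  rw [Nat.choose_mul_succ_eq, mul_right_comm, Nat.choose_mul_succ_eq, mul_right_comm]

section

variable (m : ℕ)

def walkPartialSum (N : ℕ) : ℚ :=
  4 * N / ((N + m + 1) * (N + m + 2)) * ((m + 2 * N).choose N : ℚ)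

@[simp]
lemma walkPartialSum_zero : walkPartialSum m 0 = 0 := by
  simp [walkPartialSum]

lemma cast_choose_two_mul_succ (k : ℕ) :
    ((m + 2 * (k + 1)).choose (k + 1) : ℚ)
      = ((m : ℚ) + k + 2) / (k + 1) * ((m + 2 * k + 2).choose k : ℚ) := by
  have h := Nat.choose_succ_right_eq (m + 2 * k + 2) k
  rw [show m + 2 * k + 2 - k = m + k + 2 by omega] at h
  rw [div_mul_eq_mul_div, eq_div_iff (by positivity), show m + 2 * (k + 1) = m + 2 * k + 2 by ring]
  exact_mod_cast h.trans (mul_comm _ _)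

lemma cast_choose_two_mul_add_two (k : ℕ) :
    ((m + 2 * k + 2).choose k : ℚ)
      = ((m : ℚ) + 2 * k + 1) * ((m : ℚ) + 2 * k + 2) / (((m : ℚ) + k + 1) * ((m : ℚ) + k + 2))
        * ((m + 2 * k).choose k : ℚ) := by
  have h := Nat.choose_mul_succ_mul_succ (m + 2 * k) k
  rw [show m + 2 * k + 1 - k = m + k + 1 by omega,
    show m + 2 * k + 2 - k = m + k + 2 by omega] at h
  rw [div_mul_eq_mul_div, eq_div_iff (by positivity)]
  have hq : ((_ : ℕ) : ℚ) = _ := congrArg Nat.cast h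
  push_cast at hq
  linear_combination -hq

lemma walkPartialSum_succ (k : ℕ) :
    walkPartialSum m (k + 1) = 4 / ((k : ℚ) + m + 3) * ((m + 2 * k + 2).choose k : ℚ) := by
  rw [walkPartialSum, cast_choose_two_mul_succ]
  push_cast
  field_simp
  ring

lemma walkPartialSum_succ_sub (k : ℕ) :
    walkPartialSum m (k + 1) - walkPartialSum m k
      = (((m : ℚ) + 1) * ((m : ℚ) + 5) + 3 * ((m : ℚ) + 2 * k + 1) ^ 2) /
          (((m : ℚ) + k + 1) * ((m : ℚ) + k + 2) * ((m : ℚ) + k + 3)) *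
        ((m + 2 * k).choose k : ℚ) := by
  rw [walkPartialSum_succ, cast_choose_two_mul_add_two, walkPartialSum]
  field_simp
  ring

end

theorem combiwalk7 (n m : ℕ) :
    ∑ k ∈ Finset.range (n + 1),
      ((((m : ℚ) + 1) * ((m : ℚ) + 5) + 3 * ((m : ℚ) + 2 * k + 1) ^ 2) /
          (((m : ℚ) + k + 1) * ((m : ℚ) + k + 2) * ((m : ℚ) + k + 3))) *
        (Nat.choose (m + 2 * k) k : ℚ)
    = 4 / ((n : ℚ) + m + 3) * (Nat.choose (2 * n + m + 2) n : ℚ) := by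
  simp_rw [← walkPartialSum_succ_sub]
  rw [sum_range_sub, walkPartialSum_zero, sub_zero, walkPartialSum_succ, add_comm (2 * n) m]
end

section
/- For all natural numbers n and m, the identity ∑_{k=0}^{n} (((m+1)(m+5) + (m+2k−1)(m+2k+1)) / ((m+k+1)(m+k+2)(m+k+3))) · 2^{−k} · C(m+2k, k) = (2^{1−n}/(n+m+3)) · C(2n+m+2, n) holds, where both sides are interpreted as rational numbers. -/
/-!
The right-hand side `closedForm m n` is a discrete antiderivative of the summand: it equals the
summand at `n = 0`, and `closedForm m (k + 1) - closedForm m k` is the summand at `k + 1`.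
Writing `C(m + 2k + 2, k + 1)` and `C(m + 2k + 4, k + 1)` as rational multiples of
`C(m + 2k + 2, k)` turns that difference into a rational-function identity; the sum telescopes.
-/

namespace Combiwalk

theorem add_one_mul_choose_add_succ (a k : ℕ) :
    (k + 1) * (a + k).choose (k + 1) = a * (a + k).choose k := by
  have h := Nat.choose_succ_right_eq (a + k) k
  rw [Nat.add_sub_cancel] at h
  linarith

theorem add_one_mul_add_one_mul_choose_add_add_two (a k : ℕ) :
    (k + 1) * (a + 1) * (a + k + 2).choose (k + 1)
      = (a + k + 2) * (a + k + 1) * (a + k).choose k := by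
  have h₁ := Nat.add_one_mul_choose_eq (a + k + 1) k
  have h₂ := Nat.choose_mul_succ_eq (a + k) k
  rw [show a + k + 1 - k = a + 1 by omega] at h₂
  calc (k + 1) * (a + 1) * (a + k + 2).choose (k + 1)
      = (a + 1) * ((a + k + 1 + 1).choose (k + 1) * (k + 1)) := by ring
    _ = (a + k + 2) * ((a + k + 1).choose k * (a + 1)) := by rw [← h₁]; ring
    _ = (a + k + 2) * (a + k + 1) * (a + k).choose k := by rw [← h₂]; ring

def summand (m k : ℕ) : ℚ :=
  (((m : ℚ) + 1) * ((m : ℚ) + 5) + ((m : ℚ) + 2 * k - 1) * ((m : ℚ) + 2 * k + 1)) /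
      (((m : ℚ) + k + 1) * ((m : ℚ) + k + 2) * ((m : ℚ) + k + 3)) *
    (2 : ℚ) ^ (-(k : ℤ)) * (Nat.choose (m + 2 * k) k : ℚ)

def closedForm (m n : ℕ) : ℚ :=
  (2 : ℚ) ^ (1 - (n : ℤ)) / ((n : ℚ) + m + 3) * (Nat.choose (2 * n + m + 2) n : ℚ)

theorem summand_zero (m : ℕ) : summand m 0 = closedForm m 0 := by
  simp only [summand, closedForm]
  field_simp
  norm_num
  ring

theorem summand_succ (m k : ℕ) :
    summand m (k + 1) = closedForm m (k + 1) - closedForm m k := by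
  set c : ℚ := ((2 * k + m + 2).choose k : ℚ)
  have hA : (((2 * k + m + 2).choose (k + 1) : ℕ) : ℚ) = ((m : ℚ) + k + 2) * c / (k + 1) := by
    have h := add_one_mul_choose_add_succ (m + k + 2) k
    rw [show m + k + 2 + k = 2 * k + m + 2 by ring] at h
    rw [eq_div_iff (by positivity)]
    have h' := congrArg (Nat.cast : ℕ → ℚ) h
    push_cast at h'
    linear_combination h'
  have hB : (((2 * k + m + 4).choose (k + 1) : ℕ) : ℚ)
      = (2 * (k : ℚ) + m + 4) * (2 * k + m + 3) * c / ((k + 1) * (m + k + 3)) := by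
    have h := add_one_mul_add_one_mul_choose_add_add_two (m + k + 2) k
    rw [show m + k + 2 + k = 2 * k + m + 2 by ring, show 2 * k + m + 2 + 2 = 2 * k + m + 4 by ring]
      at h
    rw [eq_div_iff (by positivity)]
    have h' := congrArg (Nat.cast : ℕ → ℚ) h
    push_cast at h'
    linear_combination h'
  simp only [summand, closedForm]
  rw [show m + 2 * (k + 1) = 2 * k + m + 2 by ring,
    show 2 * (k + 1) + m + 2 = 2 * k + m + 4 by ring, hA, hB]
  have h2 : (2 : ℚ) ≠ 0 := two_ne_zero
  simp only [Nat.cast_add, Nat.cast_one, neg_add, sub_add_eq_sub_sub, zpow_add₀ h2,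
    zpow_sub₀ h2, zpow_neg, zpow_natCast, zpow_one]
  field_simp
  ring

theorem sum_range_summand (m n : ℕ) :
    ∑ k ∈ Finset.range (n + 1), summand m k = closedForm m n := by
  rw [Finset.sum_range_succ', summand_zero]
  simp only [summand_succ, Finset.sum_range_sub]
  ring

end Combiwalk

theorem combiwalk8 (n m : ℕ) :
    ∑ k ∈ Finset.range (n + 1),
      ((((m : ℚ) + 1) * ((m : ℚ) + 5) +
            ((m : ℚ) + 2 * k - 1) * ((m : ℚ) + 2 * k + 1)) /
          (((m : ℚ) + k + 1) * ((m : ℚ) + k + 2) * ((m : ℚ) + k + 3))) *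
        (2 : ℚ) ^ (-(k : ℤ)) *
        (Nat.choose (m + 2 * k) k : ℚ)
    = (2 : ℚ) ^ (1 - (n : ℤ)) / ((n : ℚ) + m + 3) *
        (Nat.choose (2 * n + m + 2) n : ℚ) :=
  Combiwalk.sum_range_summand m n
end

section
/- Let N be a natural number and let m, r be integers with 0 ≤ m ≤ r, N + m even, m ≤ N, and r ≤ (N+m)/2. Then the number of walks of length N from 0 to m that touch level r at least once equals C(N, (N+m)/2 − r). -/
/-!
Reflecting a walk in the level `r` from its first visit to `r` on is an involution exchanging the
walks from `0` to `m` that touch `r` with the walks from `0` to `2r - m`; the latter touch `r`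
anyway, since `0 ≤ r ≤ 2r - m` and a walk with steps `±1` skips no level. A walk of length `N`
ending at `2r - m` is determined by its `(N + m)/2 - r` down-steps, whence the binomial
coefficient.
-/

open Finset

namespace Walk

variable {N : ℕ}

def partialSum (s : Fin N → ℤ) (j : ℕ) : ℤ :=
  ∑ i ∈ univ.filter (fun i : Fin N => (i : ℕ) < j), s i

def HasUnitSteps (s : Fin N → ℤ) : Prop :=
  ∀ i, s i = -1 ∨ s i = 1

def Touches (s : Fin N → ℤ) (r : ℤ) : Prop :=
  ∃ j ≤ N, partialSum s j = r

section PartialSum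

variable (s : Fin N → ℤ)

@[simp]
lemma partialSum_zero : partialSum s 0 = 0 := by
  simp [partialSum]

lemma partialSum_length : partialSum s N = ∑ i, s i := by
  simp [partialSum]

lemma partialSum_succ {j : ℕ} (hj : j < N) :
    partialSum s (j + 1) = partialSum s j + s ⟨j, hj⟩ := by
  have : univ.filter (fun i : Fin N => (i : ℕ) < j + 1)
      = insert ⟨j, hj⟩ (univ.filter (fun i : Fin N => (i : ℕ) < j)) := by
    ext i
    simp only [mem_filter, mem_insert, mem_univ, true_and, Fin.ext_iff]
    omega
  rw [partialSum, this, sum_insert (by simp), add_comm]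
  rfl

lemma touches_of_le_sum (hs : ∀ i, s i ≤ 1) {r : ℤ} (hr0 : 0 ≤ r) (hr : r ≤ ∑ i, s i) :
    Touches s r := by
  by_contra hnot
  have below : ∀ j ≤ N, partialSum s j < r := by
    intro j hj
    have hne : partialSum s j ≠ r := fun h => hnot ⟨j, hj, h⟩
    induction j with
    | zero => simp at hne ⊢; omega
    | succ j ih =>
      have := ih (by omega) (fun h => hnot ⟨j, by omega, h⟩)
      have := hs ⟨j, by omega⟩
      rw [partialSum_succ s (by omega)] at hne ⊢
      omega
  have := below N le_rfl
  rw [partialSum_length] at this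
  omega

end PartialSum

section Reflection

variable (r : ℤ) (s : Fin N → ℤ)

noncomputable def firstHit : ℕ :=
  sInf {j | partialSum s j = r}

lemma partialSum_firstHit (h : Touches s r) : partialSum s (firstHit r s) = r := by
  obtain ⟨j, -, hj⟩ := h
  exact Nat.sInf_mem (s := {j | partialSum s j = r}) ⟨j, hj⟩

lemma firstHit_le_length (h : Touches s r) : firstHit r s ≤ N := by
  obtain ⟨j, hjN, hj⟩ := h
  exact (Nat.sInf_le hj).trans hjN

lemma partialSum_ne_of_lt_firstHit {k : ℕ} (hk : k < firstHit r s) : partialSum s k ≠ r :=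
  Nat.notMem_of_lt_sInf hk

noncomputable def reflect : Fin N → ℤ :=
  fun i => if (i : ℕ) < firstHit r s then s i else -s i

lemma hasUnitSteps_reflect {s : Fin N → ℤ} (hs : HasUnitSteps s) :
    HasUnitSteps (reflect r s) := by
  intro i
  unfold reflect
  split_ifs
  · exact hs i
  · rcases hs i with h | h <;> simp [h]

lemma partialSum_reflect_of_le {j : ℕ} (hj : j ≤ firstHit r s) :
    partialSum (reflect r s) j = partialSum s j := by
  refine sum_congr rfl fun i hi => ?_
  rw [mem_filter] at hi
  simp [reflect, hi.2.trans_le hj]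

lemma partialSum_reflect_add_of_ge {j : ℕ} (hj : firstHit r s ≤ j) :
    partialSum (reflect r s) j + partialSum s j = 2 * partialSum s (firstHit r s) := by
  have hfilter : (univ.filter fun i : Fin N => (i : ℕ) < j).filter
        (fun i : Fin N => (i : ℕ) < firstHit r s)
      = univ.filter fun i : Fin N => (i : ℕ) < firstHit r s := by
    ext i
    simp only [mem_filter, mem_univ, true_and, and_iff_right_iff_imp]
    exact fun h => h.trans_le hj
  simp only [partialSum, ← sum_add_distrib, reflect]
  rw [mul_sum, ← hfilter]
  conv_rhs => rw [sum_filter]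
  refine sum_congr rfl fun i _ => ?_
  split_ifs <;> ring

variable {r s}

lemma partialSum_reflect_of_ge (h : Touches s r) {j : ℕ} (hj : firstHit r s ≤ j) :
    partialSum (reflect r s) j = 2 * r - partialSum s j := by
  have := partialSum_reflect_add_of_ge r s hj
  rw [partialSum_firstHit r s h] at this
  omega

lemma touches_reflect (h : Touches s r) : Touches (reflect r s) r :=
  ⟨firstHit r s, firstHit_le_length r s h,
    by rw [partialSum_reflect_of_le r s le_rfl, partialSum_firstHit r s h]⟩

lemma firstHit_reflect (h : Touches s r) : firstHit r (reflect r s) = firstHit r s := by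
  refine le_antisymm (Nat.sInf_le ?_) (not_lt.1 fun hlt => ?_)
  · rw [Set.mem_ofPred_eq, partialSum_reflect_of_le r s le_rfl, partialSum_firstHit r s h]
  · apply partialSum_ne_of_lt_firstHit r s hlt
    rw [← partialSum_reflect_of_le r s hlt.le]
    exact partialSum_firstHit r _ (touches_reflect h)

lemma reflect_reflect (h : Touches s r) : reflect r (reflect r s) = s := by
  funext i
  rw [reflect, firstHit_reflect h]
  unfold reflect
  split_ifs <;> simp

lemma sum_reflect (h : Touches s r) : ∑ i, reflect r s i = 2 * r - ∑ i, s i := by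
  simp only [← partialSum_length]
  exact partialSum_reflect_of_ge h (firstHit_le_length r s h)

end Reflection

noncomputable def touchingEquiv {m r : ℤ} (hr0 : 0 ≤ r) (hmr : m ≤ r) :
    {s : Fin N → ℤ // HasUnitSteps s ∧ ∑ i, s i = m ∧ Touches s r} ≃
      {s : Fin N → ℤ // HasUnitSteps s ∧ ∑ i, s i = 2 * r - m} :=
  have touches {s : Fin N → ℤ} (hs : HasUnitSteps s) (hsum : ∑ i, s i = 2 * r - m) :
      Touches s r :=
    touches_of_le_sum s (fun i => by rcases hs i with h | h <;> omega) hr0 (by omega)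
  { toFun := fun s => ⟨reflect r s, hasUnitSteps_reflect r s.2.1,
      by rw [sum_reflect s.2.2.2, s.2.2.1]⟩
    invFun := fun s => ⟨reflect r s, hasUnitSteps_reflect r s.2.1,
      by rw [sum_reflect (touches s.2.1 s.2.2), s.2.2]; ring,
      touches_reflect (touches s.2.1 s.2.2)⟩
    left_inv := fun s => Subtype.ext (reflect_reflect s.2.2.2)
    right_inv := fun s => Subtype.ext (reflect_reflect (touches s.2.1 s.2.2)) }

lemma sum_eq_sub_two_mul_card {s : Fin N → ℤ} (hs : HasUnitSteps s) :
    ∑ i, s i = N - 2 * #(univ.filter fun i => s i = -1) := by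
  have step : ∀ i, s i = 1 - 2 * if s i = -1 then 1 else 0 := by
    intro i
    rcases hs i with h | h <;> simp [h]
  rw [sum_congr rfl fun i _ => step i, sum_sub_distrib, ← mul_sum, sum_boole]
  simp

def unitStepsEquivFinset : {s : Fin N → ℤ // HasUnitSteps s} ≃ Finset (Fin N) where
  toFun s := univ.filter fun i => s.1 i = -1
  invFun A := ⟨fun i => if i ∈ A then -1 else 1, fun i => by dsimp only; split_ifs <;> simp⟩
  left_inv s := Subtype.ext <| funext fun i => by rcases s.2 i with h | h <;> simp [h]
  right_inv A := by ext i; simp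

lemma card_sum_eq_choose {M : ℤ} {k : ℕ} (hk : (N : ℤ) - 2 * k = M) :
    Nat.card {s : Fin N → ℤ // HasUnitSteps s ∧ ∑ i, s i = M} = N.choose k := by
  have e : {s : Fin N → ℤ // HasUnitSteps s ∧ ∑ i, s i = M} ≃ {A : Finset (Fin N) // #A = k} :=
    (Equiv.subtypeSubtypeEquivSubtypeInter _ _).symm.trans <|
      unitStepsEquivFinset.subtypeEquiv fun s => by
        rw [sum_eq_sub_two_mul_card s.2]
        change _ ↔ #(univ.filter fun i => s.1 i = -1) = k
        omega
  rw [Nat.card_congr e, Nat.card_eq_fintype_card, Fintype.card_finset_len, Fintype.card_fin]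

end Walk

theorem walk_reflection_general (N : ℕ) (m r : ℤ) (hm0 : 0 ≤ m) (hmr : m ≤ r)
    (heven : Even ((N : ℤ) + m))
    (hr : r ≤ ((N : ℤ) + m) / 2) :
    Nat.card {s : Fin N → ℤ //
        (∀ j, s j = -1 ∨ s j = 1) ∧
        (∑ i, s i) = m ∧
        ∃ j ≤ N, (∑ i ∈ Finset.univ.filter (fun i : Fin N => (i : ℕ) < j), s i) = r}
      = Nat.choose N (((N : ℤ) + m) / 2 - r).toNat := by
  have hk : (N : ℤ) - 2 * ((((N : ℤ) + m) / 2 - r).toNat : ℤ) = 2 * r - m := by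
    obtain ⟨t, ht⟩ := heven
    omega
  exact (Nat.card_congr (Walk.touchingEquiv (hm0.trans hmr) hmr)).trans
    (Walk.card_sum_eq_choose hk)

theorem walk_reflection (N : ℕ) (m r : ℤ) (hm0 : 0 ≤ m) (hmr : m ≤ r)
    (heven : Even ((N : ℤ) + m)) (hmN : m ≤ (N : ℤ))
    (hr : r ≤ ((N : ℤ) + m) / 2) :
    Nat.card {s : Fin N → ℤ //
        (∀ j, s j = -1 ∨ s j = 1) ∧
        (∑ i, s i) = m ∧
        ∃ j ≤ N, (∑ i ∈ Finset.univ.filter (fun i : Fin N => (i : ℕ) < j), s i) = r}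
      = Nat.choose N (((N : ℤ) + m) / 2 - r).toNat :=
  walk_reflection_general N m r hm0 hmr heven hr
end

section
/- Let N be a natural number and m an integer with 0 ≤ m ≤ N and N + m even, and set μ = (N+m)/2. Then the number of walks of length N from 0 to m all of whose partial sums are ≥ 0 equals ((m+1)/(μ+1)) · C(N, μ), where this quotient is an equality of rational numbers with the cardinality cast to ℚ. -/
/-!
Deleting the last step of a nonnegative walk ending at `m ≥ 0` leaves a nonnegative walk ending at
`m - 1` or `m + 1`, and there are none ending at `-1`. So the counts obey Pascal's recursion, as does
`C(N, μ) - C(N, μ + 1)`, with matching values at `N = 0` and at `m = -1` (where the two binomials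
agree by symmetry). The ratio `C(N, μ + 1) / C(N, μ) = (N - μ) / (μ + 1)` turns that difference
into `(m + 1) / (μ + 1) · C(N, μ)`.
-/

open Finset

def nonnegWalks (N : ℕ) (m : ℤ) : Set (Fin N → ℤ) :=
  {s | (∀ j, s j = -1 ∨ s j = 1) ∧ (∑ i, s i) = m ∧
    ∀ j ≤ N, 0 ≤ ∑ i ∈ univ.filter (fun i : Fin N => (i : ℕ) < j), s i}

theorem nonnegWalks_finite (N : ℕ) (m : ℤ) : (nonnegWalks N m).Finite :=
  (Set.Finite.pi fun _ => Set.toFinite {-1, 1}).subset fun _ hs j _ => hs.1 j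

theorem sum_filter_val_lt_of_le {M : Type*} [AddCommMonoid M] {N j : ℕ} (hj : N ≤ j)
    (s : Fin N → M) :
    ∑ i ∈ univ.filter (fun i : Fin N => (i : ℕ) < j), s i = ∑ i, s i := by
  rw [filter_true_of_mem fun i _ => i.is_lt.trans_le hj]

theorem sum_filter_val_lt_snoc {M : Type*} [AddCommMonoid M] {N j : ℕ} (hj : j ≤ N)
    (t : Fin N → M) (a : M) :
    ∑ i ∈ univ.filter (fun i : Fin (N + 1) => (i : ℕ) < j), (Fin.snoc t a : Fin (N + 1) → M) i =
      ∑ i ∈ univ.filter (fun i : Fin N => (i : ℕ) < j), t i := by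
  simp [sum_filter, Fin.sum_univ_castSucc, hj.not_gt]

theorem snoc_mem_nonnegWalks_iff {N : ℕ} {m a : ℤ} (t : Fin N → ℤ) (ha : a = -1 ∨ a = 1)
    (hm : 0 ≤ m) :
    (Fin.snoc t a : Fin (N + 1) → ℤ) ∈ nonnegWalks (N + 1) m ↔ t ∈ nonnegWalks N (m - a) := by
  have hsum : ∑ i, (Fin.snoc t a : Fin (N + 1) → ℤ) i = ∑ i, t i + a := by
    simp [Fin.sum_univ_castSucc]
  simp only [nonnegWalks, Set.mem_ofPred_eq, Fin.forall_fin_succ', Fin.snoc_castSucc,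
    Fin.snoc_last, ha, and_true, hsum, eq_sub_iff_add_eq]
  refine and_congr_right fun _ => and_congr_right fun htotal =>
    ⟨fun h j hj => ?_, fun h j hj => ?_⟩
  · simpa [sum_filter_val_lt_snoc hj] using h j (hj.trans N.le_succ)
  · rcases hj.lt_or_eq with hj | rfl
    · simpa [sum_filter_val_lt_snoc (Nat.le_of_lt_succ hj)] using h j (Nat.le_of_lt_succ hj)
    · rwa [sum_filter_val_lt_of_le le_rfl, hsum, htotal]

theorem nonnegWalks_eq_empty_of_neg {N : ℕ} {m : ℤ} (hm : m < 0) : nonnegWalks N m = ∅ :=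
  Set.eq_empty_of_forall_notMem fun s hs => by
    have := hs.2.2 N le_rfl
    rw [sum_filter_val_lt_of_le le_rfl, hs.2.1] at this
    omega

theorem nonnegWalks_succ {N : ℕ} {m : ℤ} (hm : 0 ≤ m) :
    nonnegWalks (N + 1) m =
      (Fin.snoc · 1) '' nonnegWalks N (m - 1) ∪ (Fin.snoc · (-1)) '' nonnegWalks N (m + 1) := by
  ext s
  constructor
  · intro hs
    rcases hs.1 (Fin.last N) with h | h <;> rw [← Fin.snoc_init_self s, h] at hs ⊢
    · exact Or.inr ⟨_, by simpa using (snoc_mem_nonnegWalks_iff _ (Or.inl rfl) hm).1 hs, rfl⟩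
    · exact Or.inl ⟨_, (snoc_mem_nonnegWalks_iff _ (Or.inr rfl) hm).1 hs, rfl⟩
  · rintro (⟨t, ht, rfl⟩ | ⟨t, ht, rfl⟩)
    · exact (snoc_mem_nonnegWalks_iff t (Or.inr rfl) hm).2 ht
    · exact (snoc_mem_nonnegWalks_iff t (Or.inl rfl) hm).2 (by simpa using ht)

theorem ncard_nonnegWalks_succ {N : ℕ} {m : ℤ} (hm : 0 ≤ m) :
    (nonnegWalks (N + 1) m).ncard =
      (nonnegWalks N (m - 1)).ncard + (nonnegWalks N (m + 1)).ncard := by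
  have hinj (a : ℤ) : Function.Injective (Fin.snoc · a : (Fin N → ℤ) → Fin (N + 1) → ℤ) :=
    fun t u h => by simpa using congrArg Fin.init h
  have hdisj : Disjoint ((Fin.snoc (α := fun _ => ℤ) · 1) '' nonnegWalks N (m - 1))
      ((Fin.snoc (α := fun _ => ℤ) · (-1)) '' nonnegWalks N (m + 1)) := by
    rw [Set.disjoint_left]
    rintro _ ⟨t, -, rfl⟩ ⟨u, -, h⟩
    simpa using congrFun h (Fin.last N)
  rw [nonnegWalks_succ hm, Set.ncard_union_eq hdisj ((nonnegWalks_finite _ _).image _)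
    ((nonnegWalks_finite _ _).image _), Set.ncard_image_of_injective _ (hinj _),
    Set.ncard_image_of_injective _ (hinj _)]

-- `m = 2k - N` is allowed to be `-1`, so that the recursion closes at `m = 0`.
theorem ncard_nonnegWalks (N k : ℕ) (h : N ≤ 2 * k + 1) :
    ((nonnegWalks N (2 * k - N)).ncard : ℤ) = N.choose k - N.choose (k + 1) := by
  induction N generalizing k with
  | zero =>
    rcases k.eq_zero_or_pos with rfl | hk
    · simp [nonnegWalks]
    · simp [nonnegWalks, hk.ne', Nat.choose_eq_zero_of_lt hk]
  | succ N ih =>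
    rcases h.lt_or_eq with h | h
    · obtain ⟨k, rfl⟩ : ∃ k', k = k' + 1 := ⟨k - 1, by omega⟩
      have hm : (0 : ℤ) ≤ 2 * (k + 1 : ℕ) - (N + 1 : ℕ) := by omega
      rw [ncard_nonnegWalks_succ hm, Nat.cast_add,
        show (2 * (k + 1 : ℕ) - (N + 1 : ℕ) - 1 : ℤ) = 2 * k - N by push_cast; ring,
        show (2 * (k + 1 : ℕ) - (N + 1 : ℕ) + 1 : ℤ) = 2 * (k + 1 : ℕ) - N by push_cast; ring,
        ih k (by omega), ih (k + 1) (by omega), Nat.choose_succ_succ', Nat.choose_succ_succ']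
      push_cast
      ring
    · obtain rfl : N = 2 * k := by omega
      rw [nonnegWalks_eq_empty_of_neg (by omega), Nat.choose_symm_half]
      simp

theorem cast_choose_sub_choose_succ {K : Type*} [Field K] [CharZero K] (n k : ℕ) :
    (n.choose k : K) - n.choose (k + 1) = (2 * k + 1 - n) / (k + 1) * n.choose k := by
  rcases le_or_gt k n with h | h
  · have hrec := congrArg (Nat.cast : ℕ → K) (Nat.choose_succ_right_eq n k)
    push_cast [Nat.cast_sub h] at hrec
    field_simp
    linear_combination -hrec
  · simp [Nat.choose_eq_zero_of_lt h, Nat.choose_eq_zero_of_lt (h.trans k.lt_succ_self)]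

theorem walk_nonneg_count_general (N : ℕ) (m : ℤ) (hm0 : 0 ≤ m)
    (heven : Even ((N : ℤ) + m)) (μ : ℤ) (hμ : μ = ((N : ℤ) + m) / 2) :
    (Nat.card {s : Fin N → ℤ //
        (∀ j, s j = -1 ∨ s j = 1) ∧
        (∑ i, s i) = m ∧
        ∀ j ≤ N, 0 ≤ (∑ i ∈ Finset.univ.filter (fun i : Fin N => (i : ℕ) < j), s i)} : ℚ)
      = ((m : ℚ) + 1) / ((μ : ℚ) + 1) * (Nat.choose N μ.toNat : ℚ) := by
  obtain ⟨k, rfl⟩ : ∃ k : ℕ, μ = k := ⟨μ.toNat, by omega⟩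
  obtain rfl : m = 2 * k - N := by obtain ⟨c, hc⟩ := heven; omega
  change (Nat.card (nonnegWalks N (2 * k - N)) : ℚ) = _
  rw [Nat.card_coe_set_eq, ← Int.cast_natCast, ncard_nonnegWalks N k (by omega),
    Int.toNat_natCast]
  push_cast
  rw [cast_choose_sub_choose_succ]
  ring

theorem walk_nonneg_count (N : ℕ) (m : ℤ) (hm0 : 0 ≤ m) (hmN : m ≤ (N : ℤ))
    (heven : Even ((N : ℤ) + m)) (μ : ℤ) (hμ : μ = ((N : ℤ) + m) / 2) :
    (Nat.card {s : Fin N → ℤ //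
        (∀ j, s j = -1 ∨ s j = 1) ∧
        (∑ i, s i) = m ∧
        ∀ j ≤ N, 0 ≤ (∑ i ∈ Finset.univ.filter (fun i : Fin N => (i : ℕ) < j), s i)} : ℚ)
      = ((m : ℚ) + 1) / ((μ : ℚ) + 1) * (Nat.choose N μ.toNat : ℚ) :=
  walk_nonneg_count_general N m hm0 heven μ hμ
end

section
/- Let N be a natural number and m an integer with 0 ≤ m ≤ N and N + m even, and set μ = (N+m)/2. Then the number of walks of length N from 0 to m all of whose partial sums are ≥ −1 equals ((m+2)(N+1) / ((μ+1)(μ+2))) · C(N, μ), where this quotient is an equality of rational numbers with the cardinality cast to ℚ. -/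
/-!
Write `m = 2k - N`, so that `k` is the number of up-steps. Removing the last step shows that for
`m ≥ -1` the number `W(N, m)` of walks staying `≥ -1` satisfies Pascal's recursion
`W(N + 1, m) = W(N, m + 1) + W(N, m - 1)`, while `W(N, -2) = 0`. The difference
`C(N, k) - C(N, k + 2)` satisfies the same recursion and vanishes at `m = -2` by the symmetry of
binomial coefficients, so it equals `W(N, m)`. The closed form then follows from
`C(N, k + 2) (k + 1) (k + 2) = C(N, k) (N - k) (N - k - 1)`.
-/

open Finset

theorem Nat.cast_choose_succ_mul {R : Type*} [CommRing R] (n k : ℕ) :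
    (n.choose (k + 1) : R) * (k + 1) = n.choose k * (n - k) := by
  rcases le_or_gt k n with hkn | hnk
  · have h := congrArg (Nat.cast : ℕ → R) (Nat.choose_succ_right_eq n k)
    push_cast [hkn] at h
    exact h
  · simp [Nat.choose_eq_zero_of_lt hnk, Nat.choose_eq_zero_of_lt (hnk.trans k.lt_succ_self)]

theorem Nat.cast_choose_add_two_mul {R : Type*} [CommRing R] (n k : ℕ) :
    (n.choose (k + 2) : R) * ((k + 1) * (k + 2)) = n.choose k * ((n - k) * (n - k - 1)) := by
  have h₁ := Nat.cast_choose_succ_mul (R := R) n k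
  have h₂ := Nat.cast_choose_succ_mul (R := R) n (k + 1)
  push_cast at h₂
  linear_combination (k + 1 : R) * h₂ + (n - k - 1 : R) * h₁

theorem Nat.cast_choose_sub_cast_choose_add_two {K : Type*} [Field K] [CharZero K] (n k : ℕ) :
    (n.choose k : K) - n.choose (k + 2) =
      (2 * k - n + 2) * (n + 1) / ((k + 1) * (k + 2)) * n.choose k := by
  rw [div_mul_eq_mul_div, eq_div_iff (by norm_cast)]
  linear_combination -Nat.cast_choose_add_two_mul (R := K) n k

abbrev walkPosition {N : ℕ} (s : Fin N → ℤ) (j : ℕ) : ℤ :=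
  ∑ i ∈ univ.filter (fun i : Fin N => (i : ℕ) < j), s i

def walksGeNegOne (N : ℕ) (m : ℤ) : Finset (Fin N → ℤ) :=
  (Fintype.piFinset fun _ => {-1, 1}).filter
    fun s => ∑ i, s i = m ∧ ∀ j ≤ N, -1 ≤ walkPosition s j

section Walks

variable {N : ℕ}

theorem walkPosition_of_le (s : Fin N → ℤ) {j : ℕ} (hj : N ≤ j) :
    walkPosition s j = ∑ i, s i :=
  sum_congr (filter_true_of_mem fun i _ => i.is_lt.trans_le hj) fun _ _ => rfl

theorem walkPosition_snoc (s : Fin N → ℤ) (b : ℤ) {j : ℕ} (hj : j ≤ N) :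
    walkPosition (Fin.snoc s b : Fin (N + 1) → ℤ) j = walkPosition s j := by
  simp only [walkPosition, sum_filter, Fin.sum_univ_castSucc, Fin.snoc_castSucc,
    Fin.val_castSucc, Fin.val_last, hj.not_gt, if_false, add_zero]

theorem neg_one_le_of_mem_walksGeNegOne {m : ℤ} {s : Fin N → ℤ}
    (hs : s ∈ walksGeNegOne N m) : -1 ≤ m := by
  simp only [walksGeNegOne, mem_filter] at hs
  obtain ⟨-, rfl, hpos⟩ := hs
  simpa [walkPosition_of_le] using hpos N le_rfl

theorem walksGeNegOne_eq_empty {m : ℤ} (hm : m < -1) : walksGeNegOne N m = ∅ :=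
  eq_empty_of_forall_notMem fun _ hs => (neg_one_le_of_mem_walksGeNegOne hs).not_gt hm

theorem snoc_mem_walksGeNegOne_iff {m : ℤ} (hm : -1 ≤ m) (s : Fin N → ℤ) (b : ℤ) :
    (Fin.snoc s b : Fin (N + 1) → ℤ) ∈ walksGeNegOne (N + 1) m ↔
      b ∈ ({-1, 1} : Finset ℤ) ∧ s ∈ walksGeNegOne N (m - b) := by
  have hpos : (∀ j ≤ N + 1, -1 ≤ walkPosition (Fin.snoc s b : Fin (N + 1) → ℤ) j) ↔
      (∀ j ≤ N, -1 ≤ walkPosition s j) ∧ -1 ≤ ∑ i, s i + b := by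
    constructor
    · intro h
      refine ⟨fun j hj => ?_, ?_⟩
      · simpa only [walkPosition_snoc s b hj] using h j (by omega)
      · simpa only [walkPosition_of_le _ le_rfl, Fin.sum_snoc] using h (N + 1) le_rfl
    · rintro ⟨h, hend⟩ j hj
      rcases Nat.le_succ_iff.mp hj with hj | rfl
      · simpa only [walkPosition_snoc s b hj] using h j hj
      · simpa only [walkPosition_of_le _ le_rfl, Fin.sum_snoc] using hend
  simp only [walksGeNegOne, mem_filter, Fintype.mem_piFinset, Fin.forall_fin_succ',
    Fin.snoc_castSucc, Fin.snoc_last, Fin.sum_snoc, hpos, eq_sub_iff_add_eq]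
  constructor
  · rintro ⟨⟨hs, hb⟩, hsum, hpos, -⟩
    exact ⟨hb, hs, hsum, hpos⟩
  · rintro ⟨hb, hs, hsum, hpos⟩
    exact ⟨⟨hs, hb⟩, hsum, hpos, hsum ▸ hm⟩

theorem card_walksGeNegOne_succ {m : ℤ} (hm : -1 ≤ m) :
    #(walksGeNegOne (N + 1) m) = #(walksGeNegOne N (m + 1)) + #(walksGeNegOne N (m - 1)) := by
  have hsplit : #(walksGeNegOne (N + 1) m) =
      #(({-1, 1} : Finset ℤ).sigma fun b => walksGeNegOne N (m - b)) := by
    refine card_bij' (fun s _ => ⟨s (Fin.last N), Fin.init s⟩) (fun p _ => Fin.snoc p.2 p.1)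
      (fun s hs => ?_) (fun p hp => ?_) (fun s _ => Fin.snoc_init_self s) (fun p _ => ?_)
    · rw [← Fin.snoc_init_self s, snoc_mem_walksGeNegOne_iff hm] at hs
      simpa only [mem_sigma, Fin.snoc_last, Fin.init_snoc] using hs
    · exact (snoc_mem_walksGeNegOne_iff hm p.2 p.1).2 (mem_sigma.1 hp)
    · simp only [Fin.snoc_last, Fin.init_snoc]
  rw [hsplit, card_sigma, sum_pair (by norm_num), sub_neg_eq_add]

theorem card_walksGeNegOne_zero (m : ℤ) : #(walksGeNegOne 0 m) = if m = 0 then 1 else 0 := by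
  by_cases hm : m = 0 <;> simp [walksGeNegOne, walkPosition, hm, eq_comm]

theorem card_walksGeNegOne (N k : ℕ) (hk : N ≤ 2 * k + 1) :
    (#(walksGeNegOne N (2 * k - N)) : ℤ) = N.choose k - N.choose (k + 2) := by
  induction N generalizing k with
  | zero => cases k <;> simp [card_walksGeNegOne_zero, Nat.cast_add_one_ne_zero]
  | succ N ih =>
    have ih' (j : ℕ) (hj : N ≤ 2 * j + 2) :
        (#(walksGeNegOne N (2 * j - N)) : ℤ) = N.choose j - N.choose (j + 2) := by
      rcases hj.lt_or_eq with hj | rfl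
      · exact ih j (by omega)
      · rw [walksGeNegOne_eq_empty (by push_cast; omega),
          Nat.choose_symm_of_eq_add (by ring : 2 * j + 2 = j + (j + 2))]
        simp
    rw [card_walksGeNegOne_succ (by push_cast; omega), Nat.cast_add,
      show 2 * (k : ℤ) - ↑(N + 1) + 1 = 2 * k - N by push_cast; ring, ih k (by omega)]
    cases k with
    | zero =>
      obtain rfl : N = 0 := by omega
      simp [walksGeNegOne_eq_empty]
    | succ j =>
      rw [show 2 * ((j + 1 : ℕ) : ℤ) - ↑(N + 1) - 1 = 2 * j - N by push_cast; ring,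
        ih' j (by omega), Nat.choose_succ_succ', Nat.choose_succ_succ' N (j + 2)]
      push_cast
      ring

theorem natCard_eq_card_walksGeNegOne (m : ℤ) :
    Nat.card {s : Fin N → ℤ //
        (∀ j, s j = -1 ∨ s j = 1) ∧ ∑ i, s i = m ∧ ∀ j ≤ N, -1 ≤ walkPosition s j} =
      #(walksGeNegOne N m) := by
  rw [← Nat.card_eq_finsetCard]
  exact Nat.card_congr <| Equiv.subtypeEquivRight fun s => by
    simp [walksGeNegOne, Fintype.mem_piFinset]

end Walks

theorem walk_ge_neg_one_count_general (N : ℕ) (m : ℤ) (hm0 : 0 ≤ m)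
    (heven : Even ((N : ℤ) + m)) (μ : ℤ) (hμ : μ = ((N : ℤ) + m) / 2) :
    (Nat.card {s : Fin N → ℤ //
        (∀ j, s j = -1 ∨ s j = 1) ∧
        (∑ i, s i) = m ∧
        ∀ j ≤ N, -1 ≤ (∑ i ∈ Finset.univ.filter (fun i : Fin N => (i : ℕ) < j), s i)} : ℚ)
      = ((m : ℚ) + 2) * ((N : ℚ) + 1) / (((μ : ℚ) + 1) * ((μ : ℚ) + 2)) *
          (Nat.choose N μ.toNat : ℚ) := by
  obtain ⟨a, ha⟩ := heven
  obtain ⟨k, rfl⟩ : ∃ k : ℕ, μ = k := ⟨μ.toNat, by omega⟩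
  obtain rfl : m = 2 * k - N := by omega
  have hcount : (#(walksGeNegOne N (2 * k - N)) : ℚ) = N.choose k - N.choose (k + 2) := by
    exact_mod_cast card_walksGeNegOne N k (by omega)
  rw [natCard_eq_card_walksGeNegOne, hcount, Nat.cast_choose_sub_cast_choose_add_two,
    Int.toNat_natCast]
  push_cast
  ring

theorem walk_ge_neg_one_count (N : ℕ) (m : ℤ) (hm0 : 0 ≤ m) (hmN : m ≤ (N : ℤ))
    (heven : Even ((N : ℤ) + m)) (μ : ℤ) (hμ : μ = ((N : ℤ) + m) / 2) :
    (Nat.card {s : Fin N → ℤ //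
        (∀ j, s j = -1 ∨ s j = 1) ∧
        (∑ i, s i) = m ∧
        ∀ j ≤ N, -1 ≤ (∑ i ∈ Finset.univ.filter (fun i : Fin N => (i : ℕ) < j), s i)} : ℚ)
      = ((m : ℚ) + 2) * ((N : ℚ) + 1) / (((μ : ℚ) + 1) * ((μ : ℚ) + 2)) *
          (Nat.choose N μ.toNat : ℚ) :=
  walk_ge_neg_one_count_general N m hm0 heven μ hμ
end
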